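/- Let α = (α_1,…,α_m) be a positional scoring vector, let ≻ be a preference over a finite set A of m alternatives, let a,c ∈ A be distinct, and let δ ≥ 0 be an integer. Then the maximum of s_α(≻',a) − s_α(≻',c) over all preferences ≻' with d_KT(≻,≻') ≤ δ equals the maximum, over j ∈ {0,1,…,δ}, of s_α(≻_j,a) − s_α(≻_j,c), where ≻_j := LS(RS(≻,c,j), a, δ − j) is the preference obtained from ≻ by first moving c down by (at most) j positions and then moving a up by (at most) δ − j positions. -/

import Mathlib

open Finset

abbrev Pref (A : Type*) [Fintype A] := A ≃ Fin (Fintype.card A)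

def prefers {A : Type*} [Fintype A] (p : Pref A) (x y : A) : Prop := p x < p y

instance {A : Type*} [Fintype A] (p : Pref A) (x y : A) : Decidable (prefers p x y) := by
  unfold prefers; infer_instance

def rank {A : Type*} [Fintype A] (p : Pref A) (a : A) : ℕ := (p a : ℕ) + 1

def dKT {A : Type*} [Fintype A] (p q : Pref A) : ℕ :=
  (univ.filter (fun z : A × A => prefers p z.1 z.2 ∧ prefers q z.2 z.1)).card

def margin {A : Type*} [Fintype A] {n : ℕ} (P : Fin n → Pref A) (x y : A) : ℤ :=
  ((univ.filter (fun i => prefers (P i) x y)).card : ℤ) -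
  ((univ.filter (fun i => prefers (P i) y x)).card : ℤ)

def Sk {A : Type*} [Fintype A] {n : ℕ} (k : ℕ) (P : Fin n → Pref A) (a : A) : ℕ :=
  (univ.filter (fun i => ((P i) a : ℕ) < k)).card

noncomputable def buckLevel {A : Type*} [Fintype A] {n : ℕ} (P : Fin n → Pref A) : ℕ :=
  sInf {k : ℕ | ∃ a : A, n < 2 * Sk k P a}

def movePerm : {m : ℕ} → Fin m → Fin m → Equiv.Perm (Fin m)
  | 0, i, _ => i.elim0
  | _ + 1, i, j => (finSuccEquiv' i).trans (finSuccEquiv' j).symm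

def RS {A : Type*} [Fintype A] (p : Pref A) (a : A) (k : ℕ) : Pref A :=
  p.trans (movePerm (p a) ⟨min ((p a : ℕ) + k) (Fintype.card A - 1),
    lt_of_le_of_lt (min_le_right _ _) (Nat.sub_lt (Fin.pos (p a)) one_pos)⟩)

def LS {A : Type*} [Fintype A] (p : Pref A) (a : A) (k : ℕ) : Pref A :=
  p.trans (movePerm (p a) ⟨(p a : ℕ) - k,
    lt_of_le_of_lt (Nat.sub_le _ _) (p a).isLt⟩)

def feasSet {A : Type*} [Fintype A] [DecidableEq A] (p : Pref A) (δ : ℕ) : Finset (Pref A) :=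
  univ.filter (fun q => dKT p q ≤ δ)

lemma dKT_self {A : Type*} [Fintype A] (p : Pref A) : dKT p p = 0 := by
  rw [dKT, Finset.card_eq_zero, Finset.filter_eq_empty_iff]
  rintro z -
  rintro ⟨h1, h2⟩
  exact absurd ((show p z.1 < p z.2 from h1).trans h2) (lt_irrefl _)

lemma feasSet_nonempty {A : Type*} [Fintype A] [DecidableEq A] (p : Pref A) (δ : ℕ) :
    (feasSet p δ).Nonempty :=
  ⟨p, by simp [feasSet, dKT_self]⟩

/-! If `q` is within distance `δ` of `p`, let `a` rise by `s` places and `c` fall by `t` places.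
Each place is paid for by an inverted pair `(x, a)` or `(c, x)`, and these pairs are distinct
except for `(c, a)`; hence `s + t ≤ δ`, or `s + t = δ + 1` and `c`, `a` are swapped. In both cases
some `≻_j` (with `j = t` or `j = t - 1`) puts `a` at least as high and `c` at least as low as `q`,
so by monotonicity of `α` it scores at least as well. Conversely every `≻_j` lies within distance
`δ`, since moving one alternative `k` places inverts at most `k` pairs. -/

lemma Fin.val_succAbove {n : ℕ} (p : Fin (n + 1)) (l : Fin n) :
    (p.succAbove l : ℕ) = if (l : ℕ) < p then (l : ℕ) else (l : ℕ) + 1 := by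
  unfold Fin.succAbove
  split_ifs <;> simp_all [Fin.lt_def]

lemma val_movePerm {M : ℕ} (i j x : Fin M) :
    (movePerm i j x : ℕ) =
      if x = i then (j : ℕ)
      else if (x : ℕ) < i then (if (x : ℕ) < j then (x : ℕ) else (x : ℕ) + 1)
      else (if (x : ℕ) ≤ j then (x : ℕ) - 1 else (x : ℕ)) := by
  match M with
  | 0 => exact i.elim0
  | n + 1 =>
    by_cases hx : x = i
    · subst hx; simp [movePerm]
    · obtain ⟨l, rfl⟩ := Fin.exists_succAbove_eq hx
      have hl := Fin.val_succAbove i l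
      simp only [movePerm, Equiv.trans_apply, finSuccEquiv'_succAbove, finSuccEquiv'_symm_some,
        Fin.val_succAbove, if_neg hx]
      split_ifs at hl ⊢ <;> omega

section Inversions

variable {A : Type*} [Fintype A]

def inversions (p q : Pref A) : Finset (A × A) :=
  univ.filter fun z => prefers p z.1 z.2 ∧ prefers q z.2 z.1

@[simp]
lemma mem_inversions {p q : Pref A} {z : A × A} :
    z ∈ inversions p q ↔ prefers p z.1 z.2 ∧ prefers q z.2 z.1 := by
  simp [inversions]

lemma card_inversions (p q : Pref A) : #(inversions p q) = dKT p q := rfl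

lemma dKT_le_add (p q r : Pref A) : dKT p r ≤ dKT p q + dKT q r := by
  classical
  simp only [← card_inversions]
  refine (card_le_card fun z hz => ?_).trans (card_union_le _ _)
  simp only [mem_inversions, mem_union, prefers] at hz ⊢
  by_cases hq : q z.1 < q z.2
  · exact .inr ⟨hq, hz.2⟩
  · have hne : z.1 ≠ z.2 := fun h => (h ▸ hz.1).false
    exact .inl ⟨hz.1, (not_lt.mp hq).lt_of_ne (q.injective.ne hne.symm)⟩

/-- Moving the alternative in position `i` to position `j` only inverts its order with the
alternatives lying between `i` and `j`. -/
lemma dKT_trans_movePerm_le (p : Pref A) (i j : Fin (Fintype.card A)) :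
    dKT p (p.trans (movePerm i j)) ≤ Nat.dist i j := by
  have hmem : ∀ z ∈ inversions p (p.trans (movePerm i j)),
      ((i : ℕ) ≤ j ∧ (p z.1 : ℕ) = i ∧ (i : ℕ) < p z.2 ∧ (p z.2 : ℕ) ≤ j) ∨
      ((j : ℕ) < i ∧ (p z.2 : ℕ) = i ∧ (j : ℕ) ≤ p z.1 ∧ (p z.1 : ℕ) < i) := by
    intro z hz
    simp only [mem_inversions, prefers, Equiv.trans_apply, Fin.lt_def] at hz
    have e₁ := val_movePerm i j (p z.1)
    have e₂ := val_movePerm i j (p z.2)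
    simp only [← Fin.val_inj] at e₁ e₂
    split_ifs at e₁ e₂ <;> omega
  let other : A × A → ℕ := fun z => if (p z.1 : ℕ) = i then p z.2 else p z.1
  calc dKT p (p.trans (movePerm i j))
      = #(inversions p (p.trans (movePerm i j))) := rfl
    _ ≤ #((Icc (min (i : ℕ) j) (max i j)).erase i) := by
        refine card_le_card_of_injOn other (fun z hz => ?_) (fun z hz w hw hzw => ?_)
        · have := hmem z hz
          simp only [other, coe_erase, Set.mem_sdiff, coe_Icc, Set.mem_Icc,
            Set.mem_singleton_iff]
          split_ifs <;> omega
        · have hz' := hmem z hz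
          have hw' := hmem w hw
          simp only [other] at hzw
          have h : (p z.1 : ℕ) = p w.1 ∧ (p z.2 : ℕ) = p w.2 := by split_ifs at hzw <;> omega
          exact Prod.ext (p.injective (Fin.ext h.1)) (p.injective (Fin.ext h.2))
    _ = Nat.dist i j := by
        rw [card_erase_of_mem (by simp), Nat.card_Icc, Nat.dist]
        omega

lemma dKT_RS_le (p : Pref A) (x : A) (k : ℕ) : dKT p (RS p x k) ≤ k :=
  (dKT_trans_movePerm_le p _ _).trans (by simp only [Nat.dist]; omega)

lemma dKT_LS_le (p : Pref A) (x : A) (k : ℕ) : dKT p (LS p x k) ≤ k :=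
  (dKT_trans_movePerm_le p _ _).trans (by simp only [Nat.dist]; omega)

lemma dKT_LS_RS_le (p : Pref A) (a c : A) {j δ : ℕ} (hj : j ≤ δ) :
    dKT p (LS (RS p c j) a (δ - j)) ≤ δ :=
  calc dKT p (LS (RS p c j) a (δ - j))
      ≤ dKT p (RS p c j) + dKT (RS p c j) (LS (RS p c j) a (δ - j)) := dKT_le_add _ _ _
    _ ≤ j + (δ - j) := add_le_add (dKT_RS_le _ _ _) (dKT_LS_le _ _ _)
    _ = δ := by omega

lemma card_filter_prefers (p : Pref A) (b : A) : #{x | prefers p x b} = p b := by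
  rw [← Fin.card_Iio (p b), ← card_map p.toEmbedding]
  congr 1
  ext v
  simp only [mem_map_equiv, mem_filter, mem_univ, true_and, mem_Iio]
  simp [prefers]

lemma apply_sub_apply_le_card (p q : Pref A) (a : A) :
    (p a : ℕ) - q a ≤ #{x | prefers p x a ∧ prefers q a x} := by
  classical
  rw [← card_filter_prefers p a, ← card_filter_prefers q a]
  refine (le_card_sdiff _ _).trans (card_le_card fun x hx => ?_)
  simp only [mem_sdiff, mem_filter, mem_univ, true_and] at hx ⊢
  have hxa : x ≠ a := fun h => (h ▸ hx.1 : prefers p a a).false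
  exact ⟨hx.1, (not_lt.mp hx.2).lt_of_ne (q.injective.ne hxa.symm)⟩

variable [DecidableEq A]

lemma apply_sub_apply_le_card_inversions_snd (p q : Pref A) (a : A) :
    (p a : ℕ) - q a ≤ #{z ∈ inversions p q | z.2 = a} := by
  refine (apply_sub_apply_le_card p q a).trans (card_le_card_of_injOn (fun x => (x, a))
    (fun x hx => ?_) fun x _ y _ h => congrArg Prod.fst h)
  simpa using hx

lemma apply_sub_apply_le_card_inversions_fst (p q : Pref A) (c : A) :
    (q c : ℕ) - p c ≤ #{z ∈ inversions p q | z.1 = c} := by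
  refine (apply_sub_apply_le_card q p c).trans (card_le_card_of_injOn (fun x => (c, x))
    (fun x hx => ?_) fun x _ y _ h => congrArg Prod.snd h)
  simpa [and_comm] using hx

/-- The pairs inverted by the rise of `a` and by the fall of `c` are all inversions of `(p, q)`,
and the only pair that can be counted twice is `(c, a)`. -/
lemma rise_add_fall_le_dKT (p q : Pref A) (a c : A) :
    ((p a : ℕ) - q a) + ((q c : ℕ) - p c) ≤
      dKT p q + if (c, a) ∈ inversions p q then 1 else 0 := by
  set I := inversions p q
  have hunion : {z ∈ I | z.2 = a} ∪ {z ∈ I | z.1 = c} ⊆ I :=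
    union_subset (filter_subset _ _) (filter_subset _ _)
  have hinter : {z ∈ I | z.2 = a} ∩ {z ∈ I | z.1 = c} ⊆ {z ∈ I | z = (c, a)} := by
    intro z hz
    simp only [mem_inter, mem_filter] at hz ⊢
    exact ⟨hz.1.1, Prod.ext hz.2.2 hz.1.2⟩
  calc ((p a : ℕ) - q a) + ((q c : ℕ) - p c)
      ≤ #{z ∈ I | z.2 = a} + #{z ∈ I | z.1 = c} :=
        add_le_add (apply_sub_apply_le_card_inversions_snd p q a)
          (apply_sub_apply_le_card_inversions_fst p q c)
    _ = #({z ∈ I | z.2 = a} ∪ {z ∈ I | z.1 = c}) + #({z ∈ I | z.2 = a} ∩ {z ∈ I | z.1 = c}) :=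
        (card_union_add_card_inter _ _).symm
    _ ≤ #I + #{z ∈ I | z = (c, a)} := add_le_add (card_le_card hunion) (card_le_card hinter)
    _ = dKT p q + if (c, a) ∈ I then 1 else 0 := by
        rw [card_inversions, filter_eq', apply_ite card, card_singleton, card_empty]

lemma rise_add_fall_le_or_swapped {p q : Pref A} {δ : ℕ} (hq : dKT p q ≤ δ) (a c : A) :
    ((p a : ℕ) - q a) + ((q c : ℕ) - p c) ≤ δ ∨
      ((p c : ℕ) < p a ∧ (q a : ℕ) < q c ∧ ((p a : ℕ) - q a) + ((q c : ℕ) - p c) = δ + 1) := by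
  have hbound := rise_add_fall_le_dKT p q a c
  by_cases hca : (c, a) ∈ inversions p q
  · rw [if_pos hca] at hbound
    simp only [mem_inversions, prefers, Fin.lt_def] at hca
    omega
  · rw [if_neg hca] at hbound
    omega

end Inversions

section Positions

variable {A : Type*} [Fintype A]

lemma RS_apply_self (p : Pref A) (x : A) (k : ℕ) :
    (RS p x k x : ℕ) = min ((p x : ℕ) + k) (Fintype.card A - 1) := by
  simp [RS, val_movePerm]

lemma RS_apply_of_ne (p : Pref A) {x y : A} (h : y ≠ x) (k : ℕ) :
    (RS p x k y : ℕ) =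
      if (p x : ℕ) < p y ∧ (p y : ℕ) ≤ RS p x k x then (p y : ℕ) - 1 else p y := by
  have hne : p y ≠ p x := p.injective.ne h
  rw [RS_apply_self]
  simp only [RS, Equiv.trans_apply, val_movePerm, if_neg hne]
  have := (p x).isLt
  split_ifs <;> omega

lemma LS_apply_self (p : Pref A) (x : A) (k : ℕ) : (LS p x k x : ℕ) = (p x : ℕ) - k := by
  simp [LS, val_movePerm]

lemma LS_apply_of_ne (p : Pref A) {x y : A} (h : y ≠ x) (k : ℕ) :
    (LS p x k y : ℕ) =
      if (LS p x k x : ℕ) ≤ p y ∧ (p y : ℕ) < p x then (p y : ℕ) + 1 else p y := by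
  have hne : p y ≠ p x := p.injective.ne h
  rw [LS_apply_self]
  simp only [LS, Equiv.trans_apply, val_movePerm, if_neg hne]
  split_ifs <;> omega

lemma exists_LS_RS_dominates (p q : Pref A) {a c : A} (hac : a ≠ c) {δ : ℕ}
    (hq : dKT p q ≤ δ) :
    ∃ j ≤ δ, (LS (RS p c j) a (δ - j) a : ℕ) ≤ q a ∧
      (q c : ℕ) ≤ LS (RS p c j) a (δ - j) c := by
  classical
  have hbound := rise_add_fall_le_or_swapped hq a c
  have hrise : (p a : ℕ) - q a ≤ δ := (apply_sub_apply_le_card_inversions_snd p q a).trans <|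
    (card_le_card (filter_subset _ _)).trans hq
  have hfall : (q c : ℕ) - p c ≤ δ := (apply_sub_apply_le_card_inversions_fst p q c).trans <|
    (card_le_card (filter_subset _ _)).trans hq
  /- Move `c` down to its place in `q` and spend the rest of the budget on raising `a`. This
  overspends by one only if `c` and `a` are swapped between `p` and `q`; if moreover `a` lies
  below `q c` in `p`, stop `c` one place short: raising `a` past it pushes it down the last step. -/
  obtain ⟨j, hj⟩ : ∃ j, j = if δ < ((p a : ℕ) - q a) + ((q c : ℕ) - p c) ∧ (q c : ℕ) < p a
      then (q c : ℕ) - p c - 1 else (q c : ℕ) - p c := ⟨_, rfl⟩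
  have e₁ := RS_apply_self p c j
  have e₂ := RS_apply_of_ne p hac j
  have e₃ := LS_apply_self (RS p c j) a (δ - j)
  have e₄ := LS_apply_of_ne (RS p c j) hac.symm (δ - j)
  refine ⟨j, ?_, ?_⟩ <;> split_ifs at hj e₂ e₄ <;> omega

end Positions

theorem max_score_diff_single_vote_general {A : Type*} [Fintype A]
    (α : Fin (Fintype.card A) → ℕ) (hα : Antitone α)
    (p : Pref A) (a c : A) (hac : a ≠ c) (δ : ℕ) :
    IsGreatest {z : ℤ | ∃ q : Pref A, dKT p q ≤ δ ∧ z = (α (q a) : ℤ) - (α (q c) : ℤ)}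
      ((Finset.range (δ + 1)).sup' (Finset.nonempty_range_iff.mpr (Nat.succ_ne_zero δ))
        (fun j => (α ((LS (RS p c j) a (δ - j)) a) : ℤ) -
                  (α ((LS (RS p c j) a (δ - j)) c) : ℤ))) := by
  constructor
  · obtain ⟨j, hj, hmax⟩ := exists_mem_eq_sup' (nonempty_range_iff.mpr (Nat.succ_ne_zero δ))
      (fun j => (α ((LS (RS p c j) a (δ - j)) a) : ℤ) - (α ((LS (RS p c j) a (δ - j)) c) : ℤ))
    exact ⟨_, dKT_LS_RS_le p a c (Nat.lt_succ_iff.mp (mem_range.mp hj)), hmax⟩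
  · rintro _ ⟨q, hq, rfl⟩
    obtain ⟨j, hj, ha, hc⟩ := exists_LS_RS_dominates p q hac hq
    refine le_trans ?_ (le_sup' _ (mem_range.mpr (Nat.lt_succ_of_le hj)))
    exact sub_le_sub (Int.ofNat_le.mpr (hα (Fin.le_def.mpr ha)))
      (Int.ofNat_le.mpr (hα (Fin.le_def.mpr hc)))

theorem max_score_diff_single_vote {A : Type*} [Fintype A] [DecidableEq A]
    (α : Fin (Fintype.card A) → ℕ) (hα : Antitone α)
    (p : Pref A) (a c : A) (hac : a ≠ c) (δ : ℕ) :
    IsGreatest {z : ℤ | ∃ q : Pref A, dKT p q ≤ δ ∧ z = (α (q a) : ℤ) - (α (q c) : ℤ)}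
      ((Finset.range (δ + 1)).sup' (Finset.nonempty_range_iff.mpr (Nat.succ_ne_zero δ))
        (fun j => (α ((LS (RS p c j) a (δ - j)) a) : ℤ) -
                  (α ((LS (RS p c j) a (δ - j)) c) : ℤ))) :=
  max_score_diff_single_vote_general α hα p a c hac δ
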